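/- Let R be a commutative ring, ≺ a monomial ordering on the standard monomial basis B of R⟨X₁,…,Xₙ⟩, and G a monic subset generating the ideal I = ⟨G⟩. Then G is a monic Gröbner basis of I if and only if the canonical image of the set N(G) of normal monomials in the quotient algebra R⟨X₁,…,Xₙ⟩/I forms a free R-basis of R⟨X₁,…,Xₙ⟩/I, and in that case the canonical image of N(G) in R⟨X₁,…,Xₙ⟩/⟨LM(I)⟩ is also a free R-basis of R⟨X₁,…,Xₙ⟩/⟨LM(I)⟩. -/

import Mathlib

noncomputable section
open MonoidAlgebra
open scoped Classical

/-- Words in the alphabet `X_1, ..., X_n`: the standard monomial basis `B`. -/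
abbrev Word (n : ℕ) : Type := FreeMonoid (Fin n)

/-- The free `R`-algebra `R⟨X_1, ..., X_n⟩`, realized as the monoid algebra of the
free monoid on `n` letters over `R`. -/
abbrev FreeAlg (R : Type) [CommRing R] (n : ℕ) : Type := MonoidAlgebra R (Word n)

variable {R : Type} [CommRing R] {n : ℕ}

/-- The monomial (word) `w` viewed as an element of the free algebra. -/
def mono (R : Type) [CommRing R] {n : ℕ} (w : Word n) : FreeAlg R n :=
  MonoidAlgebra.of R (Word n) w

/-- A monomial ordering: a well-ordering on words compatible with two-sided multiplication. -/
def IsMonomialOrder (n : ℕ) [LinearOrder (Word n)] : Prop :=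
  WellFoundedLT (Word n) ∧ ∀ w u v s : Word n, u < v → w * u * s < w * v * s

/-- The leading monomial of `f` (with junk value `1` for `f = 0`). -/
def LMon [LinearOrder (Word n)] (f : FreeAlg R n) : Word n :=
  if h : f = 0 then 1 else f.coeff.support.max'
    (Finsupp.support_nonempty_iff.mpr
      (mt (fun h' => by rw [← MonoidAlgebra.ofCoeff_coeff f, h']; rfl) h))

/-- The leading coefficient of `f`. -/
def LCoef [LinearOrder (Word n)] (f : FreeAlg R n) : R := f.coeff (LMon f)

/-- `f` is monic: it is nonzero and its leading coefficient is `1`. -/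
def IsMonic [LinearOrder (Word n)] (f : FreeAlg R n) : Prop := f ≠ 0 ∧ LCoef f = 1

/-- `v` divides `u` as words: `u = w * v * s` for some words `w, s`. -/
def MDvd {n : ℕ} (v u : Word n) : Prop := ∃ w s : Word n, u = w * v * s

/-- `G` is a monic Gröbner basis of the two-sided ideal `I`: every element of `G` is monic,
and the leading monomial of every nonzero element of `I` is divisible by the leading
monomial of some element of `G`. -/
def IsMonicGB [LinearOrder (Word n)] (G : Set (FreeAlg R n))
    (I : TwoSidedIdeal (FreeAlg R n)) : Prop :=
  (∀ g ∈ G, IsMonic g) ∧ ∀ f ∈ I, f ≠ 0 → ∃ g ∈ G, MDvd (LMon g) (LMon f)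

/-- The set `N(G)` of normal words modulo `G`: words not divisible by any `LM(g)`, `g ∈ G`. -/
def NormalWords [LinearOrder (Word n)] (G : Set (FreeAlg R n)) : Set (Word n) :=
  {u | ∀ g ∈ G, ¬ MDvd (LMon g) u}

/-- The set `LM(S)` of leading monomials of the nonzero elements of `S`. -/
def LMset [LinearOrder (Word n)] (S : Set (FreeAlg R n)) : Set (Word n) :=
  {w | ∃ f ∈ S, f ≠ 0 ∧ LMon f = w}

/-- The underlying `R`-submodule of a two-sided ideal of the free algebra. -/
def idealSubmodule (I : TwoSidedIdeal (FreeAlg R n)) : Submodule R (FreeAlg R n) :=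
  Submodule.restrictScalars R (TwoSidedIdeal.asIdeal I)

/-- The canonical images of the words in `S` form a free `R`-basis of the quotient of the
free algebra by the two-sided ideal `I` (equivalently, they are `R`-linearly independent
and span the quotient). -/
def ImageFreeBasis (I : TwoSidedIdeal (FreeAlg R n)) (S : Set (Word n)) : Prop :=
  LinearIndependent R (fun u : S => (idealSubmodule I).mkQ (mono R (u : Word n))) ∧
  Submodule.span R
    (Set.range fun u : S => (idealSubmodule I).mkQ (mono R (u : Word n))) = ⊤


/-! A word that is not normal has the form `a * LM(g) * b` with `g ∈ G`, so it is the leading word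
of the monic element `a * g * b` of `I = ⟨G⟩`. Subtracting such elements and descending along
the well-founded monomial order rewrites every `f` modulo `I` as a combination of normal words
not exceeding `LM(f)`: the normal words span `R⟨X⟩/I`. If `G` is a Gröbner basis, a nonzero
element of `I` supported on normal words would have a non-normal leading word, so the normal
words are independent modulo `I`. Conversely, a nonzero `f ∈ I` with normal leading word gives
`LC(f) • LM(f) ≡ (smaller normal words)` modulo `I`, contradicting independence.
For `⟨LM(I)⟩` the non-normal words lie in the ideal themselves, while every element of it is
supported on non-normal words, so the same two arguments apply. -/

open Submodule Set

lemma coeff_mono_of_ne {w v : Word n} (h : v ≠ w) : (mono R w).coeff v = 0 :=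
  Finsupp.single_eq_of_ne h

lemma coeff_mono_mul_mul (a u b : Word n) (g : FreeAlg R n) :
    (mono R a * g * mono R b).coeff (a * u * b) = g.coeff u := by
  simp [mono]

lemma mul_mul_mem_supported {T : Set (Word n)} (hT : ∀ a u b, u ∈ T → a * u * b ∈ T)
    {x : FreeAlg R n} (hx : x ∈ supported R R T) (a b : FreeAlg R n) :
    a * x * b ∈ supported R R T := by
  intro v hv
  obtain ⟨_, hax, _, hb, rfl⟩ := Finset.mem_mul.mp (support_coeff_mul_subset _ _ hv)
  obtain ⟨_, ha, u, hu, rfl⟩ := Finset.mem_mul.mp (support_coeff_mul_subset _ _ hax)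
  exact hT _ _ _ (hx hu)

lemma disjoint_supported_compl (S : Set (Word n)) :
    Disjoint (supported R R S) (supported R R Sᶜ) := by
  refine Submodule.disjoint_def.mpr fun f hS hSc => ?_
  by_contra hf
  obtain ⟨u, hu⟩ := Finsupp.support_nonempty_iff.mpr (mt MonoidAlgebra.coeff_eq_zero.mp hf)
  exact hSc hu (hS hu)

lemma map_mem_of_mem_supported {M : Type*} [AddCommGroup M] [Module R M]
    (φ : FreeAlg R n →ₗ[R] M) {N : Submodule R M} {T : Set (Word n)} {f : FreeAlg R n}
    (hf : f ∈ supported R R T) (h : ∀ u ∈ T, φ (mono R u) ∈ N) : φ f ∈ N := by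
  rw [supported_eq_span_single] at hf
  have hφ := Submodule.mem_map_of_mem (f := φ) hf
  rw [Submodule.map_span, ← Set.image_comp] at hφ
  exact Submodule.span_le.mpr (by rintro _ ⟨u, hu, rfl⟩; exact h u hu) hφ

lemma linearIndependent_mkQ_mono {I : TwoSidedIdeal (FreeAlg R n)} {S : Set (Word n)}
    (h : Disjoint (supported R R S) (idealSubmodule I)) :
    LinearIndependent R (fun u : S => (idealSubmodule I).mkQ (mono R (u : Word n))) := by
  have hv : LinearIndependent R (fun u : S => mono R (u : Word n)) :=
    (MonoidAlgebra.basis _ R).linearIndependent.comp _ Subtype.val_injective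
  refine hv.map (f := (idealSubmodule I).mkQ) ?_
  rw [ker_mkQ, ← image_eq_range]
  rwa [supported_eq_span_single] at h

section LeadingWord

variable [LinearOrder (Word n)]

lemma LMon_mem_support {f : FreeAlg R n} (hf : f ≠ 0) : LMon f ∈ f.coeff.support := by
  rw [LMon, dif_neg hf]
  exact Finset.max'_mem _ _

lemma le_LMon {f : FreeAlg R n} {u : Word n} (hu : u ∈ f.coeff.support) : u ≤ LMon f := by
  have hf : f ≠ 0 := by rintro rfl; simp at hu
  rw [LMon, dif_neg hf]
  exact Finset.le_max' _ _ hu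

lemma coeff_eq_zero_of_LMon_lt {f : FreeAlg R n} {u : Word n} (h : LMon f < u) :
    f.coeff u = 0 :=
  Finsupp.notMem_support_iff.mp fun hu => (le_LMon hu).not_gt h

lemma mul_mul_notMem_normalWords {G : Set (FreeAlg R n)} {u : Word n}
    (hu : u ∉ NormalWords G) (a b : Word n) : a * u * b ∉ NormalWords G := by
  simp only [NormalWords, MDvd, Set.mem_ofPred_eq, not_forall, not_not] at hu ⊢
  obtain ⟨g, hg, w, s, rfl⟩ := hu
  exact ⟨g, hg, a * w, s * b, by simp only [mul_assoc]⟩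

lemma coeff_mono_mul_mul_eq_zero (hord : IsMonomialOrder n) {a b v : Word n} {g : FreeAlg R n}
    (hv : a * LMon g * b < v) : (mono R a * g * mono R b).coeff v = 0 := by
  refine Finsupp.notMem_support_iff.mp fun hsupp => ?_
  obtain ⟨_, hu', rfl⟩ := Finset.mem_image.mp (support_coeff_mul_single_subset _ _ _ hsupp)
  obtain ⟨u, hu, rfl⟩ := Finset.mem_image.mp (support_coeff_single_mul_subset _ _ _ hu')
  exact hv.not_ge (StrictMono.monotone (fun _ _ h => hord.2 a _ _ b h) (le_LMon hu))

lemma sub_mem_supported_Iio {f g : FreeAlg R n} {w : Word n} (hw : f.coeff w = g.coeff w)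
    (hf : ∀ v, w < v → f.coeff v = 0) (hg : ∀ v, w < v → g.coeff v = 0) :
    f - g ∈ supported R R (Iio w) := by
  refine mem_supported'.mpr fun v hv => ?_
  rcases (not_lt.mp hv).eq_or_lt with rfl | hlt
  · simp [hw]
  · simp [hf v hlt, hg v hlt]

/-- `w` is the leading word of a monic element of `I`, stated through coefficients so that it
is also meaningful over the zero ring. -/
def IsMonicLeadingWord (I : TwoSidedIdeal (FreeAlg R n)) (w : Word n) : Prop :=
  ∃ p ∈ I, p.coeff w = 1 ∧ ∀ v, w < v → p.coeff v = 0

lemma isMonicLeadingWord_of_mono_mem {I : TwoSidedIdeal (FreeAlg R n)} {w : Word n}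
    (hw : mono R w ∈ I) : IsMonicLeadingWord I w :=
  ⟨mono R w, hw, Finsupp.single_eq_same, fun _ hv => coeff_mono_of_ne hv.ne'⟩

lemma isMonicLeadingWord_span_of_notMem_normalWords (hord : IsMonomialOrder n)
    {G : Set (FreeAlg R n)} (hmonic : ∀ g ∈ G, IsMonic g) {w : Word n}
    (hw : w ∉ NormalWords G) : IsMonicLeadingWord (TwoSidedIdeal.span G) w := by
  simp only [NormalWords, Set.mem_ofPred_eq, not_forall, not_not] at hw
  obtain ⟨g, hg, a, b, rfl⟩ := hw
  refine ⟨mono R a * g * mono R b, ?_, ?_, fun v hv => coeff_mono_mul_mul_eq_zero hord hv⟩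
  · exact TwoSidedIdeal.mul_mem_right _ _ _
      (TwoSidedIdeal.mul_mem_left _ _ _ (TwoSidedIdeal.subset_span hg))
  · rw [coeff_mono_mul_mul]
    exact (hmonic g hg).2

section Reduction

variable {I : TwoSidedIdeal (FreeAlg R n)} {S : Set (Word n)}

lemma mkQ_mono_mem_span_Iic (hord : IsMonomialOrder n)
    (hred : ∀ w ∉ S, IsMonicLeadingWord I w) (w : Word n) :
    (idealSubmodule I).mkQ (mono R w) ∈
      span R ((fun u => (idealSubmodule I).mkQ (mono R u)) '' (S ∩ Iic w)) := by
  have := hord.1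
  induction w using WellFoundedLT.induction with
  | ind w ih =>
    by_cases hw : w ∈ S
    · exact subset_span ⟨w, ⟨hw, le_rfl⟩, rfl⟩
    obtain ⟨p, hpI, hpw, hp⟩ := hred w hw
    have hlow : mono R w - p ∈ supported R R (Iio w) :=
      sub_mem_supported_Iio (by rw [hpw]; exact Finsupp.single_eq_same)
        (fun _ hv => coeff_mono_of_ne hv.ne') hp
    have hp0 : (idealSubmodule I).mkQ p = 0 := (Submodule.Quotient.mk_eq_zero _).mpr hpI
    rw [← sub_zero ((idealSubmodule I).mkQ _), ← hp0, ← map_sub]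
    exact map_mem_of_mem_supported _ hlow fun u hu =>
      span_mono (image_mono (inter_subset_inter_right _ (Iic_subset_Iic.mpr hu.le))) (ih u hu)

lemma mkQ_mem_span_Iio (hord : IsMonomialOrder n) (hred : ∀ w ∉ S, IsMonicLeadingWord I w)
    {w : Word n} {f : FreeAlg R n} (hf : f ∈ supported R R (Iio w)) :
    (idealSubmodule I).mkQ f ∈
      span R ((fun u => (idealSubmodule I).mkQ (mono R u)) '' (S ∩ Iio w)) :=
  map_mem_of_mem_supported _ hf fun u hu =>
    span_mono (image_mono (inter_subset_inter_right _ (Iic_subset_Iio.mpr hu)))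
      (mkQ_mono_mem_span_Iic hord hred u)

lemma span_mkQ_mono_eq_top (hord : IsMonomialOrder n) (hred : ∀ w ∉ S, IsMonicLeadingWord I w) :
    span R (range fun u : S => (idealSubmodule I).mkQ (mono R (u : Word n))) = ⊤ := by
  refine eq_top_iff'.mpr fun x => ?_
  obtain ⟨f, rfl⟩ := (idealSubmodule I).mkQ_surjective x
  rw [← image_eq_range (fun u => (idealSubmodule I).mkQ (mono R u)) S]
  exact map_mem_of_mem_supported _ (T := univ) (subset_univ _) fun u _ =>
    span_mono (image_mono inter_subset_left) (mkQ_mono_mem_span_Iic hord hred u)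

end Reduction

variable {G : Set (FreeAlg R n)} {I : TwoSidedIdeal (FreeAlg R n)}

lemma disjoint_supported_normalWords (hGB : IsMonicGB G I) :
    Disjoint (supported R R (NormalWords G)) (idealSubmodule I) := by
  refine Submodule.disjoint_def.mpr fun f hfN hfI => ?_
  by_contra hf
  obtain ⟨g, hg, hdvd⟩ := hGB.2 f hfI hf
  exact hfN (LMon_mem_support hf) g hg hdvd

lemma isMonicGB_of_linearIndepOn (hord : IsMonomialOrder n) (hmonic : ∀ g ∈ G, IsMonic g)
    (hind : LinearIndepOn R (fun u => (idealSubmodule (TwoSidedIdeal.span G)).mkQ (mono R u))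
      (NormalWords G)) :
    IsMonicGB G (TwoSidedIdeal.span G) := by
  refine ⟨hmonic, fun f hfI hf => ?_⟩
  by_contra hndvd
  push Not at hndvd
  set w := LMon f
  set c := f.coeff w
  have hc : c ≠ 0 := Finsupp.mem_support_iff.mp (LMon_mem_support hf)
  have hlow : f - c • mono R w ∈ supported R R (Iio w) :=
    sub_mem_supported_Iio (by simp [c, mono]) (fun _ => coeff_eq_zero_of_LMon_lt)
      (fun _ hv => by simp [coeff_mono_of_ne hv.ne'])
  have hspan := mkQ_mem_span_Iio hord
    (fun _ => isMonicLeadingWord_span_of_notMem_normalWords hord hmonic) hlow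
  have hf0 : (idealSubmodule (TwoSidedIdeal.span G)).mkQ f = 0 :=
    (Submodule.Quotient.mk_eq_zero _).mpr hfI
  rw [map_sub, hf0, zero_sub, neg_mem_iff, map_smul] at hspan
  refine hc (hind.eq_zero_of_smul_mem_span hndvd c (span_mono (image_mono ?_) hspan))
  exact fun _ hu => ⟨hu.1, ne_of_lt hu.2⟩

lemma span_mono_LMset_le_supported_compl (hGB : IsMonicGB G I) :
    idealSubmodule (TwoSidedIdeal.span (mono R '' LMset (I : Set (FreeAlg R n)))) ≤
      supported R R (NormalWords G)ᶜ := by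
  have hT : ∀ a u b, u ∈ (NormalWords G)ᶜ → a * u * b ∈ (NormalWords G)ᶜ :=
    fun a u b hu => mul_mul_notMem_normalWords hu a b
  intro f hf
  induction hf using TwoSidedIdeal.span_induction with
  | mem x hx =>
    obtain ⟨_, ⟨h, hhI, hh, rfl⟩, rfl⟩ := hx
    obtain ⟨g, hg, hdvd⟩ := hGB.2 h hhI hh
    intro v hv
    rw [Finset.mem_singleton.mp (Finsupp.support_single_subset hv)]
    exact fun hN => hN g hg hdvd
  | zero => exact zero_mem _
  | add x y _ _ hx hy => exact add_mem hx hy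
  | neg x _ hx => exact neg_mem hx
  | left_absorb a x _ hx => simpa using mul_mul_mem_supported hT hx a 1
  | right_absorb b x _ hx => simpa using mul_mul_mem_supported hT hx 1 b

lemma mono_mem_span_mono_LMset (hGI : G ⊆ I) (hG : ∀ g ∈ G, g ≠ 0) {w : Word n}
    (hw : w ∉ NormalWords G) :
    mono R w ∈ TwoSidedIdeal.span (mono R '' LMset (I : Set (FreeAlg R n))) := by
  simp only [NormalWords, Set.mem_ofPred_eq, not_forall, not_not] at hw
  obtain ⟨g, hg, a, b, rfl⟩ := hw
  rw [show mono R (a * LMon g * b) = mono R a * mono R (LMon g) * mono R b by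
    simp only [mono, map_mul]]
  exact TwoSidedIdeal.mul_mem_right _ _ _ (TwoSidedIdeal.mul_mem_left _ _ _
    (TwoSidedIdeal.subset_span ⟨LMon g, ⟨g, hGI hg, hG g hg, rfl⟩, rfl⟩))

end LeadingWord

/-- For a monic subset `G` generating `I = ⟨G⟩`: `G` is a monic Gröbner
basis of `I` iff the canonical image of `N(G)` is a free `R`-basis of `R⟨X⟩/I`, and in
that case the canonical image of `N(G)` is also a free `R`-basis of `R⟨X⟩/⟨LM(I)⟩`. -/
theorem monicGB_iff_normalWords_basis [LinearOrder (Word n)] (hord : IsMonomialOrder n)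
    (G : Set (FreeAlg R n)) (hmonic : ∀ g ∈ G, IsMonic g) :
    (IsMonicGB G (TwoSidedIdeal.span G) ↔
        ImageFreeBasis (TwoSidedIdeal.span G) (NormalWords G)) ∧
    (IsMonicGB G (TwoSidedIdeal.span G) →
        ImageFreeBasis
          (TwoSidedIdeal.span (mono R '' LMset
            ((TwoSidedIdeal.span G : TwoSidedIdeal (FreeAlg R n)) : Set (FreeAlg R n))))
          (NormalWords G)) := by
  refine ⟨⟨fun hGB => ⟨?_, ?_⟩, fun hbasis => ?_⟩, fun hGB => ⟨?_, ?_⟩⟩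
  · exact linearIndependent_mkQ_mono (disjoint_supported_normalWords hGB)
  · exact span_mkQ_mono_eq_top hord fun _ =>
      isMonicLeadingWord_span_of_notMem_normalWords hord hmonic
  · exact isMonicGB_of_linearIndepOn hord hmonic hbasis.1
  · exact linearIndependent_mkQ_mono
      ((disjoint_supported_compl _).mono_right (span_mono_LMset_le_supported_compl hGB))
  · exact span_mkQ_mono_eq_top hord fun _ hw => isMonicLeadingWord_of_mono_mem
      (mono_mem_span_mono_LMset TwoSidedIdeal.subset_span (fun g hg => (hmonic g hg).1) hw)
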